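/- Let T and S be bounded linear operators on H admitting reduced A-adjoints T^♯ and S^♯. Then, for both choices of sign, ‖T ± S‖_A ≤ √(‖TT^♯ + SS^♯‖_A + 2ω_A(TS^♯)) ≤ ‖T‖_A + ‖S‖_A. -/

import Mathlib

open ContinuousLinearMap

variable {H : Type*} [NormedAddCommGroup H] [InnerProductSpace ℂ H] [CompleteSpace H]

/-- The seminorm on `H` induced by a positive operator `A`: `‖x‖_A = √⟨Ax,x⟩`. -/
noncomputable def vnA (A : H →L[ℂ] H) (x : H) : ℝ :=
  Real.sqrt (RCLike.re (inner ℂ (A x) x : ℂ))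

/-- The `A`-seminorm of an operator: `‖X‖_A = sup {‖Xx‖_A : ‖x‖_A = 1}`. -/
noncomputable def opnA (A : H →L[ℂ] H) (X : H →L[ℂ] H) : ℝ :=
  sSup ((fun x => vnA A (X x)) '' {x : H | vnA A x = 1})

/-- The `A`-numerical radius: `ω_A(X) = sup {|⟨Xx,x⟩_A| : ‖x‖_A = 1}`. -/
noncomputable def wA (A : H →L[ℂ] H) (X : H →L[ℂ] H) : ℝ :=
  sSup ((fun x => ‖(inner ℂ (A (X x)) x : ℂ)‖) '' {x : H | vnA A x = 1})

/-- `S` is the reduced `A`-adjoint of `T`: `A ∘ S = T* ∘ A` and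
`range S ⊆ closure (range A)`. -/
def IsReducedAdjA (A T S : H →L[ℂ] H) : Prop :=
  A ∘L S = (ContinuousLinearMap.adjoint T) ∘L A ∧
    Set.range S ⊆ closure (Set.range (A : H → H))

/-- `X` is `A`-selfadjoint: `A ∘ X = X* ∘ A`. -/
def IsSelfAdjA (A X : H →L[ℂ] H) : Prop :=
  A ∘L X = (ContinuousLinearMap.adjoint X) ∘L A

/-- `Re_A(T) = (T + T♯)/2`. -/
noncomputable def ReA (T Ts : H →L[ℂ] H) : H →L[ℂ] H := (2 : ℂ)⁻¹ • (T + Ts)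

/-- `Im_A(T) = (T - T♯)/(2i)`. -/
noncomputable def ImA (T Ts : H →L[ℂ] H) : H →L[ℂ] H := (2 * Complex.I)⁻¹ • (T - Ts)

/-!
Writing `‖x‖_A = ‖A^{1/2} x‖` turns Cauchy–Schwarz, the triangle inequality and polarization
for `‖·‖_A` into the Hilbert-space ones. If `T♯` exists then `‖T♯ x‖_A² = Re ⟨T T♯ x, x⟩_A`,
so for `‖x‖_A = 1`
`‖(T♯ ± S♯) x‖_A² = Re ⟨(T T♯ + S S♯) x, x⟩_A ± 2 Re ⟨T S♯ x, x⟩_A ≤ ‖T T♯ + S S♯‖_A + 2 ω_A(T S♯)`,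
and `‖T ± S‖_A = ‖(T ± S)♯‖_A`. The upper bound follows from `‖T T♯‖_A ≤ ‖T‖_A²`,
`ω_A(T S♯) ≤ ‖T‖_A ‖S‖_A` and `‖S♯‖_A = ‖S‖_A`.

Since `sSup` of an unbounded set of reals is `0`, all of this needs the suprema to be finite:
an operator with an `A`-adjoint is bounded for `‖·‖_A`.
-/

set_option linter.unusedSectionVars false

lemma pow_mul_le_mul_pow_of_sq_le_mul {a : ℕ → ℝ} (ha : ∀ k, 0 ≤ a k)
    (h : ∀ k, a (k + 1) ^ 2 ≤ a (k + 2) * a k) (n : ℕ) :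
    a 1 ^ n * a 0 ≤ a n * a 0 ^ n := by
  have ratio : ∀ k, a 1 * a k ≤ a 0 * a (k + 1) := by
    intro k
    induction k with
    | zero => rw [mul_comm]
    | succ k ih =>
      rcases (ha (k + 1)).eq_or_lt with hk | hk
      · rw [← hk, mul_zero]; exact mul_nonneg (ha 0) (ha _)
      · refine le_of_mul_le_mul_right ?_ hk
        calc a 1 * a (k + 1) * a (k + 1) = a 1 * a (k + 1) ^ 2 := by ring
          _ ≤ a 1 * (a (k + 2) * a k) := mul_le_mul_of_nonneg_left (h k) (ha 1)
          _ = a (k + 2) * (a 1 * a k) := by ring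
          _ ≤ a (k + 2) * (a 0 * a (k + 1)) := mul_le_mul_of_nonneg_left ih (ha _)
          _ = a 0 * a (k + 1 + 1) * a (k + 1) := by ring
  induction n with
  | zero => simp
  | succ n ih =>
    calc a 1 ^ (n + 1) * a 0 = a 1 * (a 1 ^ n * a 0) := by ring
      _ ≤ a 1 * (a n * a 0 ^ n) := mul_le_mul_of_nonneg_left ih (ha 1)
      _ = a 1 * a n * a 0 ^ n := by ring
      _ ≤ a 0 * a (n + 1) * a 0 ^ n :=
          mul_le_mul_of_nonneg_right (ratio n) (pow_nonneg (ha 0) n)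
      _ = a (n + 1) * a 0 ^ (n + 1) := by ring

lemma le_of_forall_pow_le_mul_pow {a b C : ℝ} (hb : 0 ≤ b) (h : ∀ n : ℕ, a ^ n ≤ C * b ^ n) :
    a ≤ b := by
  by_contra! hab
  rcases hb.eq_or_lt with rfl | hb
  · simpa [hab.not_ge] using h 1
  · obtain ⟨n, hn⟩ := pow_unbounded_of_one_lt C ((one_lt_div hb).2 hab)
    have := h n
    rw [div_pow, lt_div_iff₀ (pow_pos hb n)] at hn
    linarith

section Seminorm

variable {A : H →L[ℂ] H}

lemma inner_apply_eq_inner_sqrt (hA : A.IsPositive) (x y : H) :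
    inner ℂ (A x) y = inner ℂ (CFC.sqrt A x) (CFC.sqrt A y) := by
  have hsa : IsSelfAdjoint (CFC.sqrt A) := .of_nonneg (CFC.sqrt_nonneg A)
  conv_lhs => rw [← CFC.sqrt_mul_sqrt_self A ((nonneg_iff_isPositive A).mpr hA)]
  exact hsa.isSymmetric _ _

lemma vnA_eq_norm_sqrt (hA : A.IsPositive) (x : H) : vnA A x = ‖CFC.sqrt A x‖ := by
  rw [vnA, inner_apply_eq_inner_sqrt hA, inner_self_eq_norm_sq, Real.sqrt_sq (norm_nonneg _)]

lemma vnA_nonneg (A : H →L[ℂ] H) (x : H) : 0 ≤ vnA A x := Real.sqrt_nonneg _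

lemma vnA_sq (hA : A.IsPositive) (x : H) : vnA A x ^ 2 = RCLike.re (inner ℂ (A x) x) :=
  Real.sq_sqrt (hA.re_inner_nonneg_left x)

lemma norm_inner_le_vnA_mul_vnA (hA : A.IsPositive) (x y : H) :
    ‖inner ℂ (A x) y‖ ≤ vnA A x * vnA A y := by
  rw [inner_apply_eq_inner_sqrt hA, vnA_eq_norm_sqrt hA, vnA_eq_norm_sqrt hA]
  exact norm_inner_le_norm _ _

lemma re_inner_apply_comm (hA : A.IsPositive) (x y : H) :
    RCLike.re (inner ℂ (A x) y) = RCLike.re (inner ℂ (A y) x) := by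
  rw [hA.inner_left_eq_inner_right, inner_re_symm]

lemma vnA_add_sq (hA : A.IsPositive) (x y : H) :
    vnA A (x + y) ^ 2 = vnA A x ^ 2 + 2 * RCLike.re (inner ℂ (A x) y) + vnA A y ^ 2 := by
  simp only [vnA_eq_norm_sqrt hA, inner_apply_eq_inner_sqrt hA, map_add]
  exact norm_add_sq _ _

lemma vnA_add_le (hA : A.IsPositive) (x y : H) : vnA A (x + y) ≤ vnA A x + vnA A y := by
  simpa only [vnA_eq_norm_sqrt hA, map_add] using norm_add_le _ _

lemma vnA_smul (hA : A.IsPositive) (c : ℂ) (x : H) : vnA A (c • x) = ‖c‖ * vnA A x := by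
  rw [vnA_eq_norm_sqrt hA, vnA_eq_norm_sqrt hA, map_smul, norm_smul]

lemma vnA_le_norm_sqrt_mul_norm (hA : A.IsPositive) (x : H) :
    vnA A x ≤ ‖CFC.sqrt A‖ * ‖x‖ :=
  (vnA_eq_norm_sqrt hA x).trans_le ((CFC.sqrt A).le_opNorm x)

end Seminorm

def IsAdjA (A X Y : H →L[ℂ] H) : Prop :=
  A ∘L Y = adjoint X ∘L A

namespace IsAdjA

variable {A X Y X' Y' : H →L[ℂ] H}

lemma inner_eq (h : IsAdjA A X Y) (x w : H) :
    inner ℂ (A (Y x)) w = inner ℂ (A x) (X w) := by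
  rw [← comp_apply, h, comp_apply, adjoint_inner_left]

lemma symm (hA : A.IsPositive) (h : IsAdjA A X Y) : IsAdjA A Y X := by
  have := congrArg adjoint h
  rwa [adjoint_comp, adjoint_comp, adjoint_adjoint, hA.isSelfAdjoint.adjoint_eq, eq_comm] at this

lemma comp (h : IsAdjA A X Y) (h' : IsAdjA A X' Y') : IsAdjA A (X ∘L X') (Y' ∘L Y) := by
  rw [IsAdjA, adjoint_comp, ← comp_assoc, h', comp_assoc, h, comp_assoc]

lemma add (h : IsAdjA A X Y) (h' : IsAdjA A X' Y') : IsAdjA A (X + X') (Y + Y') := by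
  rw [IsAdjA, comp_add, h, h', map_add, add_comp]

lemma neg (h : IsAdjA A X Y) : IsAdjA A (-X) (-Y) := by
  rw [IsAdjA, comp_neg, h, map_neg, neg_comp]

lemma vnA_sq_eq (hA : A.IsPositive) (h : IsAdjA A X Y) (x : H) :
    vnA A (Y x) ^ 2 = RCLike.re (inner ℂ (A (X (Y x))) x) := by
  rw [vnA_sq hA, h.inner_eq, re_inner_apply_comm hA]

lemma vnA_sq_le (hA : A.IsPositive) (h : IsAdjA A X Y) (x : H) :
    vnA A (Y x) ^ 2 ≤ vnA A (X (Y x)) * vnA A x :=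
  (h.vnA_sq_eq hA x).trans_le <|
    (RCLike.re_le_norm _).trans (norm_inner_le_vnA_mul_vnA hA _ _)

end IsAdjA

lemma norm_pow_apply_le (M : H →L[ℂ] H) (x : H) (n : ℕ) : ‖(M ^ n) x‖ ≤ ‖M‖ ^ n * ‖x‖ := by
  induction n with
  | zero => simp
  | succ n ih =>
    rw [pow_succ', mul_apply_eq_comp, pow_succ', mul_assoc]
    exact M.le_opNorm_of_le ih

/-- An `A`-selfadjoint operator is bounded for `‖·‖_A` by its operator norm: by Cauchy–Schwarz
the sequence `‖Mᵏ x‖_A` is log-convex, so it grows at least like `(‖M x‖_A / ‖x‖_A)ᵏ`, while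
it is `O(‖M‖ᵏ)`. -/
lemma IsSelfAdjA.vnA_apply_le {A M : H →L[ℂ] H} (hA : A.IsPositive) (hM : IsSelfAdjA A M)
    (x : H) : vnA A (M x) ≤ ‖M‖ * vnA A x := by
  set a : ℕ → ℝ := fun k => vnA A ((M ^ k) x) with ha
  have hlog : ∀ k, a (k + 1) ^ 2 ≤ a (k + 2) * a k := fun k => by
    simpa only [ha, pow_succ', mul_apply_eq_comp, comp_apply] using
      IsAdjA.vnA_sq_le hA hM ((M ^ k) x)
  have hnonneg : ∀ k, 0 ≤ a k := fun k => vnA_nonneg A _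
  have ha1 : a 1 = vnA A (M x) := by simp [ha]
  have ha0 : a 0 = vnA A x := by simp [ha]
  rcases (hnonneg 0).eq_or_lt with h0 | h0
  · have := hlog 0
    rw [← h0, mul_zero] at this
    rw [← ha1, ← ha0, ← h0, mul_zero]
    nlinarith [hnonneg 1]
  · rw [← ha1, ← ha0]
    refine le_of_forall_pow_le_mul_pow (mul_nonneg (norm_nonneg M) h0.le)
      (C := ‖CFC.sqrt A‖ * ‖x‖ / a 0) fun n => ?_
    have hn : a n ≤ ‖CFC.sqrt A‖ * (‖M‖ ^ n * ‖x‖) :=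
      (vnA_le_norm_sqrt_mul_norm hA _).trans
        (mul_le_mul_of_nonneg_left (norm_pow_apply_le M x n) (norm_nonneg _))
    rw [mul_pow, div_mul_eq_mul_div, le_div_iff₀ h0]
    calc a 1 ^ n * a 0 ≤ a n * a 0 ^ n := pow_mul_le_mul_pow_of_sq_le_mul hnonneg hlog n
      _ ≤ ‖CFC.sqrt A‖ * (‖M‖ ^ n * ‖x‖) * a 0 ^ n := by gcongr
      _ = _ := by ring

lemma IsAdjA.vnA_apply_le {A X Y : H →L[ℂ] H} (hA : A.IsPositive) (h : IsAdjA A X Y) (x : H) :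
    vnA A (X x) ≤ √‖Y ∘L X‖ * vnA A x := by
  have hYX : IsSelfAdjA A (Y ∘L X) := (h.symm hA).comp h
  refine le_of_pow_le_pow_left₀ two_ne_zero
    (mul_nonneg (Real.sqrt_nonneg _) (vnA_nonneg A x)) ?_
  calc vnA A (X x) ^ 2 ≤ vnA A (Y (X x)) * vnA A x := (h.symm hA).vnA_sq_le hA x
    _ ≤ ‖Y ∘L X‖ * vnA A x * vnA A x := by
        gcongr
        · exact vnA_nonneg A x
        · exact hYX.vnA_apply_le hA x
    _ = (√‖Y ∘L X‖ * vnA A x) ^ 2 := by rw [mul_pow, Real.sq_sqrt (norm_nonneg _)]; ring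

section OperatorSeminorm

variable {A X Y : H →L[ℂ] H}

lemma opnA_nonneg (A X : H →L[ℂ] H) : 0 ≤ opnA A X :=
  Real.sSup_nonneg <| by rintro _ ⟨x, -, rfl⟩; exact vnA_nonneg A _

lemma opnA_le {c : ℝ} (hc : 0 ≤ c) (h : ∀ x, vnA A x = 1 → vnA A (X x) ≤ c) : opnA A X ≤ c :=
  Real.sSup_le (by rintro _ ⟨x, hx, rfl⟩; exact h x hx) hc

lemma wA_le {c : ℝ} (hc : 0 ≤ c) (h : ∀ x, vnA A x = 1 → ‖inner ℂ (A (X x)) x‖ ≤ c) :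
    wA A X ≤ c :=
  Real.sSup_le (by rintro _ ⟨x, hx, rfl⟩; exact h x hx) hc

lemma wA_neg (A X : H →L[ℂ] H) : wA A (-X) = wA A X := by
  simp only [wA, neg_apply, map_neg, inner_neg_left, norm_neg]

namespace IsAdjA

lemma vnA_le_opnA (hA : A.IsPositive) (h : IsAdjA A X Y) {x : H} (hx : vnA A x = 1) :
    vnA A (X x) ≤ opnA A X := by
  refine le_csSup ⟨√‖Y ∘L X‖, ?_⟩ ⟨x, hx, rfl⟩
  rintro _ ⟨y, hy : vnA A y = 1, rfl⟩
  simpa [hy] using h.vnA_apply_le hA y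

lemma norm_inner_le_opnA (hA : A.IsPositive) (h : IsAdjA A X Y) {x : H} (hx : vnA A x = 1) :
    ‖inner ℂ (A (X x)) x‖ ≤ opnA A X := by
  calc ‖inner ℂ (A (X x)) x‖ ≤ vnA A (X x) * vnA A x := norm_inner_le_vnA_mul_vnA hA _ x
    _ ≤ opnA A X := by rw [hx, mul_one]; exact h.vnA_le_opnA hA hx

lemma norm_inner_le_wA (hA : A.IsPositive) (h : IsAdjA A X Y) {x : H} (hx : vnA A x = 1) :
    ‖inner ℂ (A (X x)) x‖ ≤ wA A X := by
  refine le_csSup ⟨opnA A X, ?_⟩ ⟨x, hx, rfl⟩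
  rintro _ ⟨y, hy, rfl⟩
  exact h.norm_inner_le_opnA hA hy

lemma vnA_apply_le_opnA_mul (hA : A.IsPositive) (h : IsAdjA A X Y) (x : H) :
    vnA A (X x) ≤ opnA A X * vnA A x := by
  rcases (vnA_nonneg A x).eq_or_lt with h0 | h0
  · simpa [← h0] using h.vnA_apply_le hA x
  · have hc : ‖(vnA A x : ℂ)⁻¹‖ = (vnA A x)⁻¹ := by
      rw [norm_inv, Complex.norm_of_nonneg h0.le]
    have := h.vnA_le_opnA hA (x := (vnA A x : ℂ)⁻¹ • x)
      (by rw [vnA_smul hA, hc, inv_mul_cancel₀ h0.ne'])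
    rw [map_smul, vnA_smul hA, hc, inv_mul_le_iff₀ h0] at this
    linarith

lemma opnA_le_opnA (hA : A.IsPositive) (h : IsAdjA A X Y) : opnA A Y ≤ opnA A X := by
  refine opnA_le (opnA_nonneg A X) fun x hx => ?_
  have : vnA A (Y x) ^ 2 ≤ opnA A X * vnA A (Y x) :=
    (h.vnA_sq_le hA x).trans (by simpa [hx] using h.vnA_apply_le_opnA_mul hA (Y x))
  nlinarith [vnA_nonneg A (Y x), opnA_nonneg A X]

lemma opnA_eq (hA : A.IsPositive) (h : IsAdjA A X Y) : opnA A Y = opnA A X :=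
  (h.opnA_le_opnA hA).antisymm ((h.symm hA).opnA_le_opnA hA)

end IsAdjA

lemma vnA_apply_apply_le {X' Y' : H →L[ℂ] H} (hA : A.IsPositive) (hX : IsAdjA A X X')
    (hY : IsAdjA A Y Y') {x : H} (hx : vnA A x = 1) :
    vnA A (X (Y x)) ≤ opnA A X * opnA A Y :=
  (hX.vnA_apply_le_opnA_mul hA _).trans <|
    mul_le_mul_of_nonneg_left (hY.vnA_le_opnA hA hx) (opnA_nonneg A X)

end OperatorSeminorm

section Inequalities

variable {A T S Ts Ss : H →L[ℂ] H}

theorem opnA_add_le_sqrt (hA : A.IsPositive) (hT : IsAdjA A T Ts) (hS : IsAdjA A S Ss) :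
    opnA A (T + S) ≤ √(opnA A (T ∘L Ts + S ∘L Ss) + 2 * wA A (T ∘L Ss)) := by
  have hsum : IsAdjA A (T ∘L Ts + S ∘L Ss) (T ∘L Ts + S ∘L Ss) :=
    (hT.comp (hT.symm hA)).add (hS.comp (hS.symm hA))
  have hcross : IsAdjA A (T ∘L Ss) (S ∘L Ts) := hT.comp (hS.symm hA)
  rw [← (hT.add hS).opnA_eq hA]
  refine opnA_le (Real.sqrt_nonneg _) fun x hx => Real.le_sqrt_of_sq_le ?_
  calc vnA A ((Ts + Ss) x) ^ 2
      = vnA A (Ts x) ^ 2 + 2 * RCLike.re (inner ℂ (A (Ts x)) (Ss x)) + vnA A (Ss x) ^ 2 :=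
        vnA_add_sq hA _ _
    _ = RCLike.re (inner ℂ (A ((T ∘L Ts + S ∘L Ss) x)) x)
          + 2 * RCLike.re (inner ℂ (A ((T ∘L Ss) x)) x) := by
        rw [hT.vnA_sq_eq hA, hS.vnA_sq_eq hA, hT.inner_eq, re_inner_apply_comm hA x]
        simp only [add_apply, comp_apply, map_add, inner_add_left]
        ring
    _ ≤ opnA A (T ∘L Ts + S ∘L Ss) + 2 * wA A (T ∘L Ss) := by
        gcongr
        · exact (RCLike.re_le_norm _).trans (hsum.norm_inner_le_opnA hA hx)
        · exact (RCLike.re_le_norm _).trans (hcross.norm_inner_le_wA hA hx)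

theorem sqrt_le_opnA_add_opnA (hA : A.IsPositive) (hT : IsAdjA A T Ts) (hS : IsAdjA A S Ss) :
    √(opnA A (T ∘L Ts + S ∘L Ss) + 2 * wA A (T ∘L Ss)) ≤ opnA A T + opnA A S := by
  have hT0 := opnA_nonneg A T
  have hS0 := opnA_nonneg A S
  have hdiag : opnA A (T ∘L Ts + S ∘L Ss) ≤ opnA A T ^ 2 + opnA A S ^ 2 := by
    refine opnA_le (by positivity) fun x hx => ?_
    calc vnA A ((T ∘L Ts + S ∘L Ss) x) ≤ vnA A (T (Ts x)) + vnA A (S (Ss x)) :=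
          vnA_add_le hA _ _
      _ ≤ opnA A T * opnA A Ts + opnA A S * opnA A Ss :=
          add_le_add (vnA_apply_apply_le hA hT (hT.symm hA) hx)
            (vnA_apply_apply_le hA hS (hS.symm hA) hx)
      _ = opnA A T ^ 2 + opnA A S ^ 2 := by rw [hT.opnA_eq hA, hS.opnA_eq hA]; ring
  have hcross : wA A (T ∘L Ss) ≤ opnA A T * opnA A S := by
    refine wA_le (mul_nonneg hT0 hS0) fun x hx => ?_
    calc ‖inner ℂ (A ((T ∘L Ss) x)) x‖ ≤ opnA A (T ∘L Ss) :=
          (hT.comp (hS.symm hA)).norm_inner_le_opnA hA hx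
      _ ≤ opnA A T * opnA A Ss :=
          opnA_le (mul_nonneg hT0 (opnA_nonneg A Ss)) fun y hy =>
            vnA_apply_apply_le hA hT (hS.symm hA) hy
      _ = opnA A T * opnA A S := by rw [hS.opnA_eq hA]
  rw [Real.sqrt_le_left (add_nonneg hT0 hS0)]
  nlinarith

end Inequalities

theorem stmt7_general (A T S Ts Ss : H →L[ℂ] H) (hA : A.IsPositive)
    (hTs : IsReducedAdjA A T Ts) (hSs : IsReducedAdjA A S Ss) :
    (opnA A (T + S) ≤ Real.sqrt (opnA A (T ∘L Ts + S ∘L Ss) + 2 * wA A (T ∘L Ss)) ∧ opnA A (T - S) ≤ Real.sqrt (opnA A (T ∘L Ts + S ∘L Ss) + 2 * wA A (T ∘L Ss))) ∧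
    Real.sqrt (opnA A (T ∘L Ts + S ∘L Ss) + 2 * wA A (T ∘L Ss)) ≤ opnA A T + opnA A S := by
  have hT : IsAdjA A T Ts := hTs.1
  have hS : IsAdjA A S Ss := hSs.1
  refine ⟨⟨opnA_add_le_sqrt hA hT hS, ?_⟩, sqrt_le_opnA_add_opnA hA hT hS⟩
  simpa only [← sub_eq_add_neg, neg_comp, comp_neg, neg_neg, wA_neg] using
    opnA_add_le_sqrt hA hT hS.neg

theorem stmt7 (A T S Ts Ss : H →L[ℂ] H) (hA : A.IsPositive) (hA0 : A ≠ 0)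
    (hTs : IsReducedAdjA A T Ts) (hSs : IsReducedAdjA A S Ss) :
    (opnA A (T + S) ≤ Real.sqrt (opnA A (T ∘L Ts + S ∘L Ss) + 2 * wA A (T ∘L Ss)) ∧ opnA A (T - S) ≤ Real.sqrt (opnA A (T ∘L Ts + S ∘L Ss) + 2 * wA A (T ∘L Ss))) ∧
    Real.sqrt (opnA A (T ∘L Ts + S ∘L Ss) + 2 * wA A (T ∘L Ss)) ≤ opnA A T + opnA A S :=
  stmt7_general A T S Ts Ss hA hTs hSs
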